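/- Let 𝐗 = (X,𝕏) be a p-rough path controlled by ω on [0,T] and f : ℝ^d → ℝ^e infinitely differentiable. Then for all 0 ≤ s ≤ t ≤ T, the bracket of the pushforward satisfies [f_*𝐗]^{ij}_{st} = ∫_s^t ∂_α f^i(X) ∂_β f^j(X) d[𝐗]^{αβ}, where the right-hand side is the Young integral of u ↦ ∂_α f^i(X_u) ∂_β f^j(X_u) against the bracket increments [𝐗]. -/

import Mathlib

open Filter Topology Set

noncomputable section

/-- `ω` is a control on `[0,T]`: continuous on the simplex, vanishing on the diagonal,
superadditive and nonnegative. -/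
def IsControl (T : ℝ) (ω : ℝ → ℝ → ℝ) : Prop :=
  ContinuousOn (fun q : ℝ × ℝ => ω q.1 q.2) {q : ℝ × ℝ | 0 ≤ q.1 ∧ q.1 ≤ q.2 ∧ q.2 ≤ T} ∧
    (∀ t : ℝ, 0 ≤ t → t ≤ T → ω t t = 0) ∧
    (∀ s u t : ℝ, 0 ≤ s → s ≤ u → u ≤ t → t ≤ T → ω s u + ω u t ≤ ω s t) ∧
    (∀ s t : ℝ, 0 ≤ s → s ≤ t → t ≤ T → 0 ≤ ω s t)

/-- Membership in `C^{1/r}_ω([0,T],V)`: continuity on `[0,T]` together with the increment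
bound `‖Y_t − Y_s‖ ≤ C ω(s,t)^r`. -/
def HolderPath (T r : ℝ) (ω : ℝ → ℝ → ℝ) {V : Type*} [NormedAddCommGroup V]
    (Y : ℝ → V) : Prop :=
  ContinuousOn Y (Set.Icc 0 T) ∧
    ∃ C : ℝ, ∀ s t : ℝ, 0 ≤ s → s ≤ t → t ≤ T → ‖Y t - Y s‖ ≤ C * ω s t ^ r

/-- `(X, XX)` is a `p`-rough path controlled by `ω` on `[0,T]`. -/
def IsRoughPath (T p : ℝ) (ω : ℝ → ℝ → ℝ) {d : ℕ}
    (X : ℝ → Fin d → ℝ) (XX : ℝ → ℝ → Fin d → Fin d → ℝ) : Prop :=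
  HolderPath T (1 / p) ω X ∧
    ContinuousOn (fun q : ℝ × ℝ => XX q.1 q.2) {q : ℝ × ℝ | 0 ≤ q.1 ∧ q.1 ≤ q.2 ∧ q.2 ≤ T} ∧
    (∃ C : ℝ, ∀ s t : ℝ, 0 ≤ s → s ≤ t → t ≤ T → ‖XX s t‖ ≤ C * ω s t ^ (2 / p)) ∧
    (∀ s u t : ℝ, 0 ≤ s → s ≤ u → u ≤ t → t ≤ T → ∀ α β : Fin d,
      XX s t α β = XX s u α β + (X u α - X s α) * (X t β - X u β) + XX u t α β)

/-- `(H, H')` is an `X`-controlled path with values in `V`; `H' t γ` is the Gubinelli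
derivative at time `t` in the direction of the `γ`-th coordinate. -/
def IsControlledPath (T p : ℝ) (ω : ℝ → ℝ → ℝ) {d : ℕ} (X : ℝ → Fin d → ℝ)
    {V : Type*} [NormedAddCommGroup V] [NormedSpace ℝ V]
    (H : ℝ → V) (H' : ℝ → Fin d → V) : Prop :=
  HolderPath T (1 / p) ω H ∧ HolderPath T (1 / p) ω H' ∧
    ∃ C : ℝ, ∀ s t : ℝ, 0 ≤ s → s ≤ t → t ≤ T →
      ‖H t - H s - ∑ γ, (X t γ - X s γ) • H' s γ‖ ≤ C * ω s t ^ (2 / p)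

/-- The bracket `[𝐗]` of the rough path `(X, XX)`. -/
def bracket {d : ℕ} (X : ℝ → Fin d → ℝ) (XX : ℝ → ℝ → Fin d → Fin d → ℝ)
    (s t : ℝ) (α β : Fin d) : ℝ :=
  (X t α - X s α) * (X t β - X s β) - (XX s t α β + XX s t β α)

/-- A partition of `[s,t]` into `n` consecutive intervals. -/
structure TimePartition (s t : ℝ) where
  n : ℕ
  pts : ℕ → ℝ
  mono : Monotone pts
  first : pts 0 = s
  last : pts n = t

/-- The mesh of a partition. -/
def TimePartition.mesh {s t : ℝ} (π : TimePartition s t) : ℝ :=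
  ⨆ i : Fin π.n, (π.pts (i.1 + 1) - π.pts i.1)

/-- The Riemann sum of a two-parameter summand along a partition. -/
def riemannSum {s t : ℝ} {V : Type*} [AddCommMonoid V]
    (π : TimePartition s t) (f : ℝ → ℝ → V) : V :=
  ∑ i ∈ Finset.range π.n, f (π.pts i) (π.pts (i + 1))

/-- `L` is the limit of the Riemann sums of `f` along every sequence of partitions of `[s,t]`
with mesh tending to `0`. -/
def RSumLimit {V : Type*} [AddCommMonoid V] [TopologicalSpace V] (s t : ℝ)
    (f : ℝ → ℝ → V) (L : V) : Prop :=
  ∀ π : ℕ → TimePartition s t,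
    Tendsto (fun n => (π n).mesh) atTop (𝓝 0) →
      Tendsto (fun n => riemannSum (π n) f) atTop (𝓝 L)

/-- The compensated Riemann summand `H_u X_{uv} + H'_u 𝕏_{uv}` of a controlled integrand
against a rough path. -/
def roughSummand {d e : ℕ} (X : ℝ → Fin d → ℝ) (XX : ℝ → ℝ → Fin d → Fin d → ℝ)
    (H : ℝ → Fin e → Fin d → ℝ) (H' : ℝ → Fin d → Fin e → Fin d → ℝ) :
    ℝ → ℝ → Fin e → ℝ :=
  fun u v k => (∑ γ, H u k γ * (X v γ - X u γ)) + ∑ α, ∑ β, H' u α k β * XX u v α β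

/-- The partial derivative `∂_α f^i (x)`. -/
def pderiv {m n : ℕ} (f : (Fin m → ℝ) → (Fin n → ℝ)) (x : Fin m → ℝ)
    (α : Fin m) (i : Fin n) : ℝ :=
  fderiv ℝ f x (Pi.single α 1) i

/-- The second partial derivative `∂_{αβ} f^k (x)`. -/
def pderiv2 {m n : ℕ} (f : (Fin m → ℝ) → (Fin n → ℝ)) (x : Fin m → ℝ)
    (α β : Fin m) (k : Fin n) : ℝ :=
  fderiv ℝ (fun y => fderiv ℝ f y (Pi.single β 1) k) x (Pi.single α 1)

/-!
Chen's identity makes the bracket of `f_*𝐗` additive, so its Riemann sums telescope to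
`[f_*𝐗]_{st}`. A first-order Taylor expansion of `f` along `X`, together with the defining
estimate of the pushforward, shows that each summand `∂_α f^i ∂_β f^j (X_u) [𝐗]^{αβ}_{uv}`
differs from `[f_*𝐗]_{uv}` by `O(ω(u,v)^θ)` for some `θ > 1`. Over a partition these errors
add up to at most `(max_i ω(t_i, t_{i+1}))^{θ-1} ω(s,t)`, which vanishes as the mesh goes to `0`
because `ω` is uniformly continuous and vanishes on the diagonal.
-/

namespace TimePartition

variable {s t : ℝ} (P : TimePartition s t)

def controlMesh (ω : ℝ → ℝ → ℝ) : ℝ :=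
  ⨆ i : Fin P.n, ω (P.pts i) (P.pts (i + 1))

lemma le_pts (i : ℕ) : s ≤ P.pts i :=
  P.first.symm.le.trans (P.mono (Nat.zero_le i))

lemma pts_le {i : ℕ} (hi : i ≤ P.n) : P.pts i ≤ t :=
  (P.mono hi).trans P.last.le

lemma pts_sub_pts_le_mesh {i : ℕ} (hi : i < P.n) : P.pts (i + 1) - P.pts i ≤ P.mesh :=
  le_ciSup (f := fun k : Fin P.n => P.pts (k.1 + 1) - P.pts k.1)
    (Set.finite_range _).bddAbove ⟨i, hi⟩

lemma le_controlMesh (ω : ℝ → ℝ → ℝ) {i : ℕ} (hi : i < P.n) :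
    ω (P.pts i) (P.pts (i + 1)) ≤ P.controlMesh ω :=
  le_ciSup (f := fun k : Fin P.n => ω (P.pts k) (P.pts (k.1 + 1)))
    (Set.finite_range _).bddAbove ⟨i, hi⟩

lemma riemannSum_eq_of_additive {V : Type*} [AddCommGroup V] {A : ℝ → ℝ → V}
    (hA : ∀ u v w, s ≤ u → u ≤ v → v ≤ w → w ≤ t → A u w = A u v + A v w) :
    riemannSum P A = A s t := by
  have hAss : A s s = 0 := by
    simpa using hA s s s le_rfl le_rfl le_rfl ((P.le_pts 0).trans (P.pts_le (Nat.zero_le _)))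
  have hstep : ∀ i ∈ Finset.range P.n,
      A (P.pts i) (P.pts (i + 1)) = A s (P.pts (i + 1)) - A s (P.pts i) := by
    intro i hi
    rw [hA s (P.pts i) (P.pts (i + 1)) le_rfl (P.le_pts i) (P.mono i.le_succ)
      (P.pts_le (Finset.mem_range.mp hi))]
    abel
  rw [riemannSum, Finset.sum_congr rfl hstep, Finset.sum_range_sub (fun i => A s (P.pts i)),
    P.last, P.first, hAss, sub_zero]

end TimePartition

lemma Real.rpow_le_rpow_sub_mul_rpow {x B a b : ℝ} (hx : 0 ≤ x) (hxB : x ≤ B) (ha : 0 < a)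
    (hab : a ≤ b) : x ^ b ≤ B ^ (b - a) * x ^ a := by
  calc x ^ b = x ^ (b - a) * x ^ a := by
        rw [← Real.rpow_add' hx (by linarith), sub_add_cancel]
    _ ≤ B ^ (b - a) * x ^ a := by gcongr

namespace IsControl

variable {T : ℝ} {ω : ℝ → ℝ → ℝ}

lemma nonneg (hω : IsControl T ω) {s t : ℝ} (hs : 0 ≤ s) (hst : s ≤ t) (ht : t ≤ T) :
    0 ≤ ω s t :=
  hω.2.2.2 s t hs hst ht

lemma exists_nonneg_bound (hω : IsControl T ω) {r : ℝ} {g : ℝ → ℝ → ℝ}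
    (h : ∃ C, ∀ s t, 0 ≤ s → s ≤ t → t ≤ T → g s t ≤ C * ω s t ^ r) :
    ∃ C, 0 ≤ C ∧ ∀ s t, 0 ≤ s → s ≤ t → t ≤ T → g s t ≤ C * ω s t ^ r := by
  obtain ⟨C, hC⟩ := h
  refine ⟨max C 0, le_max_right _ _, fun s t hs hst ht => (hC s t hs hst ht).trans ?_⟩
  exact mul_le_mul_of_nonneg_right (le_max_left _ _) (Real.rpow_nonneg (hω.nonneg hs hst ht) _)

lemma le_of_subinterval (hω : IsControl T ω) {s u v t : ℝ} (hs : 0 ≤ s) (hsu : s ≤ u)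
    (huv : u ≤ v) (hvt : v ≤ t) (ht : t ≤ T) : ω u v ≤ ω s t := by
  have h₁ := hω.2.2.1 s u t hs hsu (huv.trans hvt) ht
  have h₂ := hω.2.2.1 u v t (hs.trans hsu) huv hvt ht
  linarith [hω.nonneg hs hsu (huv.trans (hvt.trans ht)),
    hω.nonneg ((hs.trans hsu).trans huv) hvt ht]

lemma riemannSum_le (hω : IsControl T ω) {s t : ℝ} (hs : 0 ≤ s) (ht : t ≤ T)
    (P : TimePartition s t) : riemannSum P ω ≤ ω s t := by
  have hstep : ∀ i ∈ Finset.range P.n,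
      ω (P.pts i) (P.pts (i + 1)) ≤ ω s (P.pts (i + 1)) - ω s (P.pts i) := by
    intro i hi
    have := hω.2.2.1 s (P.pts i) (P.pts (i + 1)) hs (P.le_pts i) (P.mono i.le_succ)
      ((P.pts_le (Finset.mem_range.mp hi)).trans ht)
    linarith
  refine (Finset.sum_le_sum hstep).trans_eq ?_
  rw [Finset.sum_range_sub (fun i => ω s (P.pts i)), P.last, P.first,
    hω.2.1 s hs ((P.le_pts 0).trans ((P.pts_le (Nat.zero_le _)).trans ht)), sub_zero]

lemma controlMesh_nonneg (hω : IsControl T ω) {s t : ℝ} (hs : 0 ≤ s) (ht : t ≤ T)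
    (P : TimePartition s t) : 0 ≤ P.controlMesh ω :=
  Real.iSup_nonneg fun i : Fin P.n => hω.nonneg (hs.trans (P.le_pts i.1)) (P.mono i.1.le_succ)
    ((P.pts_le i.2).trans ht)

lemma exists_pos_forall_le_of_sub_lt (hω : IsControl T ω) {ε : ℝ} (hε : 0 < ε) :
    ∃ δ > 0, ∀ u v, 0 ≤ u → u ≤ v → v ≤ T → v - u < δ → ω u v ≤ ε := by
  set S : Set (ℝ × ℝ) := {q | 0 ≤ q.1 ∧ q.1 ≤ q.2 ∧ q.2 ≤ T}
  have hS : IsCompact S := by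
    refine ((isCompact_Icc (a := 0) (b := T)).prod (isCompact_Icc (a := 0) (b := T))
      ).of_isClosed_subset ?_ ?_
    · exact (isClosed_le continuous_const continuous_fst).inter
        ((isClosed_le continuous_fst continuous_snd).inter
          (isClosed_le continuous_snd continuous_const))
    · rintro ⟨a, b⟩ ⟨h₁, h₂, h₃⟩
      exact ⟨⟨h₁, h₂.trans h₃⟩, ⟨h₁.trans h₂, h₃⟩⟩
  obtain ⟨δ, hδ, hunif⟩ :=
    Metric.uniformContinuousOn_iff.mp (hS.uniformContinuousOn_of_continuous hω.1) ε hε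
  refine ⟨δ, hδ, fun u v hu huv hvT hlt => ?_⟩
  have hdist : dist (u, v) (u, u) < δ := by
    rw [Prod.dist_eq, dist_self, Real.dist_eq, abs_of_nonneg (sub_nonneg.mpr huv)]
    exact max_lt hδ hlt
  have := hunif (u, v) ⟨hu, huv, hvT⟩ (u, u) ⟨hu, le_rfl, huv.trans hvT⟩ hdist
  rw [hω.2.1 u hu (huv.trans hvT), Real.dist_eq, sub_zero] at this
  exact (le_abs_self _).trans this.le

lemma tendsto_controlMesh (hω : IsControl T ω) {s t : ℝ} (hs : 0 ≤ s) (ht : t ≤ T)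
    (π : ℕ → TimePartition s t) (hπ : Tendsto (fun n => (π n).mesh) atTop (𝓝 0)) :
    Tendsto (fun n => (π n).controlMesh ω) atTop (𝓝 0) := by
  rw [Metric.tendsto_atTop] at hπ ⊢
  intro ε hε
  obtain ⟨δ, hδ, hsmall⟩ := hω.exists_pos_forall_le_of_sub_lt (half_pos hε)
  obtain ⟨N, hN⟩ := hπ δ hδ
  refine ⟨N, fun n hn => ?_⟩
  set P := π n
  have hmesh : P.mesh < δ := by simpa [Real.dist_eq] using (le_abs_self _).trans_lt (hN n hn)
  have hle : P.controlMesh ω ≤ ε / 2 := Real.iSup_le (fun i => hsmall _ _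
      (hs.trans (P.le_pts i)) (P.mono i.1.le_succ) ((P.pts_le i.2).trans ht)
      ((P.pts_sub_pts_le_mesh i.2).trans_lt hmesh)) (half_pos hε).le
  rw [Real.dist_eq, sub_zero, abs_of_nonneg (hω.controlMesh_nonneg hs ht P)]
  linarith

lemma riemannSum_rpow_le (hω : IsControl T ω) {s t θ : ℝ} (hs : 0 ≤ s) (ht : t ≤ T)
    (hθ : 1 ≤ θ) (P : TimePartition s t) :
    riemannSum P (fun u v => ω u v ^ θ) ≤ P.controlMesh ω ^ (θ - 1) * ω s t := by
  have hstep : ∀ i ∈ Finset.range P.n, ω (P.pts i) (P.pts (i + 1)) ^ θ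
      ≤ P.controlMesh ω ^ (θ - 1) * ω (P.pts i) (P.pts (i + 1)) := by
    intro i hi
    have hi := Finset.mem_range.mp hi
    simpa using Real.rpow_le_rpow_sub_mul_rpow
      (hω.nonneg (hs.trans (P.le_pts i)) (P.mono i.le_succ) ((P.pts_le hi).trans ht))
      (P.le_controlMesh ω hi) one_pos hθ
  refine (Finset.sum_le_sum hstep).trans ?_
  rw [← Finset.mul_sum]
  exact mul_le_mul_of_nonneg_left (hω.riemannSum_le hs ht P)
    (Real.rpow_nonneg (hω.controlMesh_nonneg hs ht P) _)

theorem rSumLimit_of_norm_sub_le (hω : IsControl T ω) {V : Type*} [NormedAddCommGroup V]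
    {θ K : ℝ} (hθ : 1 < θ) (hK : 0 ≤ K) {Ξ A : ℝ → ℝ → V}
    (hA : ∀ u v w, 0 ≤ u → u ≤ v → v ≤ w → w ≤ T → A u w = A u v + A v w)
    (hΞ : ∀ u v, 0 ≤ u → u ≤ v → v ≤ T → ‖Ξ u v - A u v‖ ≤ K * ω u v ^ θ)
    {s t : ℝ} (hs : 0 ≤ s) (ht : t ≤ T) :
    RSumLimit s t Ξ (A s t) := by
  intro π hπ
  have hbound : ∀ n, ‖riemannSum (π n) Ξ - A s t‖
      ≤ K * ((π n).controlMesh ω ^ (θ - 1) * ω s t) := by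
    intro n
    set P := π n
    rw [← P.riemannSum_eq_of_additive fun u v w hu huv hvw hw =>
      hA u v w (hs.trans hu) huv hvw (hw.trans ht), riemannSum, riemannSum,
      ← Finset.sum_sub_distrib]
    refine (norm_sum_le _ _).trans ((Finset.sum_le_sum fun i hi => hΞ _ _
      (hs.trans (P.le_pts i)) (P.mono i.le_succ)
      ((P.pts_le (Finset.mem_range.mp hi)).trans ht)).trans ?_)
    rw [← Finset.mul_sum]
    exact mul_le_mul_of_nonneg_left (hω.riemannSum_rpow_le hs ht hθ.le P) hK
  have hlim : Tendsto (fun n => K * ((π n).controlMesh ω ^ (θ - 1) * ω s t)) atTop (𝓝 0) := by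
    have := (((hω.tendsto_controlMesh hs ht π hπ).rpow_const
      (Or.inr (sub_nonneg.mpr hθ.le))).mul_const (ω s t)).const_mul K
    rwa [Real.zero_rpow (by linarith), zero_mul, mul_zero] at this
  exact tendsto_iff_norm_sub_tendsto_zero.mpr
    (squeeze_zero (fun _ => norm_nonneg _) hbound hlim)

end IsControl

theorem ContDiff.exists_norm_sub_sub_fderiv_le {E F : Type*} [NormedAddCommGroup E]
    [NormedSpace ℝ E] [ProperSpace E] [NormedAddCommGroup F] [NormedSpace ℝ F] {f : E → F}
    (hf : ContDiff ℝ 2 f) (R : ℝ) :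
    ∃ K, 0 ≤ K ∧ ∀ a ∈ Metric.closedBall (0 : E) R, ∀ b ∈ Metric.closedBall (0 : E) R,
      ‖f b - f a - fderiv ℝ f a (b - a)‖ ≤ K * ‖b - a‖ ^ 2 := by
  have hdf : ContDiff ℝ 1 (fderiv ℝ f) := hf.fderiv_right (by norm_num)
  obtain ⟨K, hK⟩ := hdf.contDiffOn.exists_lipschitzOnWith one_ne_zero (convex_closedBall 0 R)
    (isCompact_closedBall 0 R)
  refine ⟨K, K.2, fun a ha b hb => ?_⟩
  have hseg := (convex_closedBall (0 : E) R).segment_subset ha hb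
  have hderiv : ∀ z ∈ segment ℝ a b, ‖fderiv ℝ f z - fderiv ℝ f a‖ ≤ K * ‖b - a‖ := by
    intro z hz
    refine (hK.norm_sub_le (hseg hz) ha).trans (mul_le_mul_of_nonneg_left ?_ K.2)
    obtain ⟨μ, ν, hμ, hν, hμν, rfl⟩ := hz
    have : μ • a + ν • b - a = ν • (b - a) := by
      rw [eq_sub_of_add_eq hμν]; module
    rw [this, norm_smul, Real.norm_of_nonneg hν]
    exact mul_le_of_le_one_left (norm_nonneg _) (by linarith)
  have := (convex_segment a b).norm_image_sub_le_of_norm_fderiv_le'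
    (fun z _ => (hf.differentiable (by norm_num)).differentiableAt) hderiv
    (left_mem_segment ℝ a b) (right_mem_segment ℝ a b)
  rwa [mul_assoc, ← sq] at this

lemma fderiv_apply_eq_sum_pderiv {d e : ℕ} (f : (Fin d → ℝ) → (Fin e → ℝ)) (x h : Fin d → ℝ)
    (i : Fin e) : fderiv ℝ f x h i = ∑ α, pderiv f x α i * h α := by
  conv_lhs => rw [← Finset.univ_sum_single h]
  simp only [map_sum, Finset.sum_apply, pderiv]
  refine Finset.sum_congr rfl fun α _ => ?_
  rw [mul_comm, ← smul_eq_mul, ← Pi.smul_apply, ← map_smul, ← Pi.single_smul', smul_eq_mul,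
    mul_one]

lemma sum_pderiv_mul_bracket {d e : ℕ} (f : (Fin d → ℝ) → (Fin e → ℝ)) (x : Fin d → ℝ)
    (X : ℝ → Fin d → ℝ) (XX : ℝ → ℝ → Fin d → Fin d → ℝ) (u v : ℝ) (i j : Fin e) :
    ∑ α, ∑ β, pderiv f x α i * pderiv f x β j * bracket X XX u v α β
      = fderiv ℝ f x (X v - X u) i * fderiv ℝ f x (X v - X u) j
        - ∑ α, ∑ β, pderiv f x α i * pderiv f x β j * XX u v α β
        - ∑ α, ∑ β, pderiv f x α j * pderiv f x β i * XX u v α β := by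
  rw [fderiv_apply_eq_sum_pderiv, fderiv_apply_eq_sum_pderiv, Finset.sum_mul_sum,
    Finset.sum_comm (f := fun α β => pderiv f x α j * pderiv f x β i * XX u v α β)]
  simp only [← Finset.sum_sub_distrib]
  refine Finset.sum_congr rfl fun α _ => Finset.sum_congr rfl fun β _ => ?_
  simp only [bracket, Pi.sub_apply]
  ring

lemma abs_mul_sub_mul_le {ι : Type*} [Fintype ι] (y a : ι → ℝ) (i j : ι) :
    |y i * y j - a i * a j| ≤ ‖y - a‖ * (‖y‖ + ‖a‖) := by
  have hcoord : ∀ (z : ι → ℝ) k, |z k| ≤ ‖z‖ := fun z k => norm_le_pi_norm z k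
  calc |y i * y j - a i * a j| = |(y - a) i * y j + a i * (y - a) j| := by
        congr 1; simp only [Pi.sub_apply]; ring
    _ ≤ |(y - a) i| * |y j| + |a i| * |(y - a) j| := by
        rw [← abs_mul, ← abs_mul]; exact abs_add_le _ _
    _ ≤ ‖y - a‖ * ‖y‖ + ‖a‖ * ‖y - a‖ := by gcongr <;> apply hcoord
    _ = ‖y - a‖ * (‖y‖ + ‖a‖) := by ring

lemma abs_apply_apply_le_norm {ι κ : Type*} [Fintype ι] [Fintype κ] (F : ι → κ → ℝ) (i : ι)
    (j : κ) : |F i j| ≤ ‖F‖ :=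
  (norm_le_pi_norm (F i) j).trans (norm_le_pi_norm F i)

theorem HolderPath.exists_abs_mul_sub_fderiv_mul_le {T p : ℝ} {ω : ℝ → ℝ → ℝ}
    (hω : IsControl T ω) {d e : ℕ} {X : ℝ → Fin d → ℝ} (hX : HolderPath T (1 / p) ω X)
    {f : (Fin d → ℝ) → (Fin e → ℝ)} (hf : ContDiff ℝ 2 f)
    (hY : HolderPath T (1 / p) ω (fun t => f (X t))) :
    ∃ K, 0 ≤ K ∧ ∀ u v, 0 ≤ u → u ≤ v → v ≤ T → ∀ i j,
      |(f (X v) i - f (X u) i) * (f (X v) j - f (X u) j)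
        - fderiv ℝ f (X u) (X v - X u) i * fderiv ℝ f (X u) (X v - X u) j|
        ≤ K * ω u v ^ (3 / p) := by
  obtain ⟨R, hR⟩ := isCompact_Icc.exists_bound_of_continuousOn hX.1
  have hball : ∀ u ∈ Icc 0 T, X u ∈ Metric.closedBall 0 R := by simpa using hR
  obtain ⟨K, hK, htaylor⟩ := hf.exists_norm_sub_sub_fderiv_le R
  obtain ⟨M, hM⟩ := (isCompact_closedBall (0 : Fin d → ℝ) R).exists_bound_of_continuousOn
    (hf.continuous_fderiv (by norm_num)).continuousOn
  obtain ⟨Cx, hCx, hXb⟩ := hω.exists_nonneg_bound hX.2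
  obtain ⟨Cy, hCy, hYb⟩ := hω.exists_nonneg_bound hY.2
  refine ⟨K * Cx ^ 2 * (Cy + max M 0 * Cx), by positivity, fun u v hu huv hv i j => ?_⟩
  have hu' : u ∈ Icc 0 T := ⟨hu, huv.trans hv⟩
  set w := ω u v ^ (1 / p)
  have hw : 0 ≤ w := Real.rpow_nonneg (hω.nonneg hu huv hv) _
  have hw3 : w ^ 3 = ω u v ^ (3 / p) := by
    rw [← Real.rpow_natCast, ← Real.rpow_mul (hω.nonneg hu huv hv), one_div_mul_eq_div,
      Nat.cast_ofNat]
  set L := fderiv ℝ f (X u)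
  have hx : ‖X v - X u‖ ≤ Cx * w := hXb u v hu huv hv
  have hrem : ‖(f (X v) - f (X u)) - L (X v - X u)‖ ≤ K * (Cx * w) ^ 2 :=
    (htaylor _ (hball u hu') _ (hball v ⟨hu.trans huv, hv⟩)).trans (by gcongr)
  have hy : ‖f (X v) - f (X u)‖ ≤ Cy * w := hYb u v hu huv hv
  have ha : ‖L (X v - X u)‖ ≤ max M 0 * (Cx * w) :=
    (L.le_opNorm _).trans (by gcongr; exact (hM _ (hball u hu')).trans (le_max_left _ _))
  calc _ ≤ ‖(f (X v) - f (X u)) - L (X v - X u)‖ * (‖f (X v) - f (X u)‖ + ‖L (X v - X u)‖) :=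
        abs_mul_sub_mul_le (f (X v) - f (X u)) (L (X v - X u)) i j
    _ ≤ K * (Cx * w) ^ 2 * (Cy * w + max M 0 * (Cx * w)) := by gcongr
    _ = K * Cx ^ 2 * (Cy + max M 0 * Cx) * w ^ 3 := by ring
    _ = _ := by rw [hw3]

lemma IsRoughPath.bracket_add {T p : ℝ} {ω : ℝ → ℝ → ℝ} {d : ℕ} {X : ℝ → Fin d → ℝ}
    {XX : ℝ → ℝ → Fin d → Fin d → ℝ} (hX : IsRoughPath T p ω X XX) {u v w : ℝ} (hu : 0 ≤ u)
    (huv : u ≤ v) (hvw : v ≤ w) (hw : w ≤ T) :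
    bracket X XX u w = bracket X XX u v + bracket X XX v w := by
  ext α β
  simp only [bracket, Pi.add_apply, hX.2.2.2 u v w hu huv hvw hw]
  ring

theorem exists_norm_sum_pderiv_mul_bracket_sub_bracket_le {T p : ℝ} (hT : 0 ≤ T) (hp : 0 < p)
    (hp3 : p < 3) {ω : ℝ → ℝ → ℝ} (hω : IsControl T ω) {d e : ℕ} {X : ℝ → Fin d → ℝ}
    (hX : HolderPath T (1 / p) ω X) {XX : ℝ → ℝ → Fin d → Fin d → ℝ}
    {f : (Fin d → ℝ) → (Fin e → ℝ)} (hf : ContDiff ℝ 2 f) {YY : ℝ → ℝ → Fin e → Fin e → ℝ}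
    (hY : HolderPath T (1 / p) ω (fun t => f (X t)))
    (hpush : ∃ C θ : ℝ, 1 < θ ∧ ∀ s t : ℝ, 0 ≤ s → s ≤ t → t ≤ T →
      ‖(fun (i j : Fin e) => YY s t i j -
          ∑ α, ∑ β, pderiv f (X s) α i * pderiv f (X s) β j * XX s t α β)‖
        ≤ C * ω s t ^ θ) :
    ∃ K θ : ℝ, 0 ≤ K ∧ 1 < θ ∧ ∀ u v, 0 ≤ u → u ≤ v → v ≤ T →
      ‖(fun (i j : Fin e) =>
          ∑ α, ∑ β, pderiv f (X u) α i * pderiv f (X u) β j * bracket X XX u v α β)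
        - bracket (fun r => f (X r)) YY u v‖ ≤ K * ω u v ^ θ := by
  obtain ⟨K₁, hK₁, hprod⟩ := hX.exists_abs_mul_sub_fderiv_mul_le hω hf hY
  obtain ⟨C, θ, hθ, hC⟩ := hpush
  obtain ⟨C₂, hC₂, hdefect⟩ := hω.exists_nonneg_bound ⟨C, hC⟩
  set θ₀ := min (3 / p) θ
  have hθ₀ : 1 < θ₀ := lt_min ((one_lt_div hp).mpr hp3) hθ
  set B := ω 0 T
  have hB : 0 ≤ B := hω.nonneg le_rfl hT le_rfl
  refine ⟨K₁ * B ^ (3 / p - θ₀) + 2 * C₂ * B ^ (θ - θ₀), θ₀, by positivity, hθ₀,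
    fun u v hu huv hv => ?_⟩
  have hωuv := hω.nonneg hu huv hv
  have hωB : ω u v ≤ B := hω.le_of_subinterval le_rfl hu huv hv le_rfl
  have hE : ∀ i j, |YY u v i j - ∑ α, ∑ β, pderiv f (X u) α i * pderiv f (X u) β j * XX u v α β|
      ≤ C₂ * ω u v ^ θ := fun i j =>
    (abs_apply_apply_le_norm _ i j).trans (hdefect u v hu huv hv)
  refine pi_norm_le_iff_of_nonneg (by positivity) |>.mpr fun i =>
    pi_norm_le_iff_of_nonneg (by positivity) |>.mpr fun j => ?_
  rw [Pi.sub_apply, Pi.sub_apply, Real.norm_eq_abs, sum_pderiv_mul_bracket]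
  calc _ = |-((f (X v) i - f (X u) i) * (f (X v) j - f (X u) j)
            - fderiv ℝ f (X u) (X v - X u) i * fderiv ℝ f (X u) (X v - X u) j)
          + (YY u v i j - ∑ α, ∑ β, pderiv f (X u) α i * pderiv f (X u) β j * XX u v α β)
          + (YY u v j i - ∑ α, ∑ β, pderiv f (X u) α j * pderiv f (X u) β i * XX u v α β)| := by
        simp only [bracket]; ring_nf
    _ ≤ K₁ * ω u v ^ (3 / p) + C₂ * ω u v ^ θ + C₂ * ω u v ^ θ := by
        refine (abs_add_three _ _ _).trans ?_
        rw [abs_neg]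
        gcongr
        exacts [hprod u v hu huv hv i j, hE i j, hE j i]
    _ ≤ K₁ * (B ^ (3 / p - θ₀) * ω u v ^ θ₀) + 2 * C₂ * (B ^ (θ - θ₀) * ω u v ^ θ₀) := by
        have h₁ := Real.rpow_le_rpow_sub_mul_rpow hωuv hωB (by linarith) (min_le_left (3 / p) θ)
        have h₂ := Real.rpow_le_rpow_sub_mul_rpow hωuv hωB (by linarith) (min_le_right (3 / p) θ)
        nlinarith [mul_le_mul_of_nonneg_left h₁ hK₁, mul_le_mul_of_nonneg_left h₂ hC₂]
    _ = _ := by ring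

theorem statement13_general (T p : ℝ) (hp1 : 1 ≤ p) (hp3 : p < 3) (d e : ℕ)
    (ω : ℝ → ℝ → ℝ) (hω : IsControl T ω)
    (X : ℝ → Fin d → ℝ) (XX : ℝ → ℝ → Fin d → Fin d → ℝ)
    (hX : IsRoughPath T p ω X XX)
    (f : (Fin d → ℝ) → (Fin e → ℝ)) (hf : ContDiff ℝ (⊤ : ℕ∞) f)
    (YY : ℝ → ℝ → Fin e → Fin e → ℝ)
    (hYrp : IsRoughPath T p ω (fun t => f (X t)) YY)
    (hYpush : ∃ C θ : ℝ, 1 < θ ∧ ∀ s t : ℝ, 0 ≤ s → s ≤ t → t ≤ T →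
      ‖(fun (i j : Fin e) => YY s t i j -
          ∑ α, ∑ β, pderiv f (X s) α i * pderiv f (X s) β j * XX s t α β)‖
        ≤ C * ω s t ^ θ) :
    ∀ s t : ℝ, 0 ≤ s → s ≤ t → t ≤ T →
      RSumLimit s t (fun (u v : ℝ) (i j : Fin e) =>
        ∑ α, ∑ β, pderiv f (X u) α i * pderiv f (X u) β j * bracket X XX u v α β)
        (bracket (fun r => f (X r)) YY s t) := by
  intro s t hs hst ht
  obtain ⟨K, θ, hK, hθ, hbound⟩ := exists_norm_sum_pderiv_mul_bracket_sub_bracket_le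
    (hs.trans (hst.trans ht)) (by linarith) hp3 hω hX.1 (hf.of_le (by norm_cast)) hYrp.1 hYpush
  exact hω.rSumLimit_of_norm_sub_le (A := bracket (fun r => f (X r)) YY) hθ hK
    (fun u v w hu huv hvw hw => hYrp.bracket_add hu huv hvw hw) hbound hs ht

/-- Kunita–Watanabe for pushforwards: the bracket of `f_*𝐗` is the Young
integral of `∂f ⊗ ∂f (X)` against the bracket of `𝐗`. -/
theorem statement13 (T p : ℝ) (hT : 0 ≤ T) (hp1 : 1 ≤ p) (hp3 : p < 3) (d e : ℕ)
    (ω : ℝ → ℝ → ℝ) (hω : IsControl T ω)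
    (X : ℝ → Fin d → ℝ) (XX : ℝ → ℝ → Fin d → Fin d → ℝ)
    (hX : IsRoughPath T p ω X XX)
    (f : (Fin d → ℝ) → (Fin e → ℝ)) (hf : ContDiff ℝ (⊤ : ℕ∞) f)
    (YY : ℝ → ℝ → Fin e → Fin e → ℝ)
    (hYrp : IsRoughPath T p ω (fun t => f (X t)) YY)
    (hYpush : ∃ C θ : ℝ, 1 < θ ∧ ∀ s t : ℝ, 0 ≤ s → s ≤ t → t ≤ T →
      ‖(fun (i j : Fin e) => YY s t i j -
          ∑ α, ∑ β, pderiv f (X s) α i * pderiv f (X s) β j * XX s t α β)‖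
        ≤ C * ω s t ^ θ) :
    ∀ s t : ℝ, 0 ≤ s → s ≤ t → t ≤ T →
      RSumLimit s t (fun (u v : ℝ) (i j : Fin e) =>
        ∑ α, ∑ β, pderiv f (X u) α i * pderiv f (X u) β j * bracket X XX u v α β)
        (bracket (fun r => f (X r)) YY s t) :=
  statement13_general T p hp1 hp3 d e ω hω X XX hX f hf YY hYrp hYpush
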